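/- Define G₁ = I + (α₁/f₁)E₂₁ (3×3 matrix, E₂₁ the matrix unit). Suppose M is the matrix of Section 4 (M = diag(ε₁,ε₂,ε₃) + f₁E₁₂ + gE₁₃ + f₂E₂₃ + z(E₁₁ + 3qE₂₁ + (-2)E₂₂ + f₀E₃₁ + 3rE₃₂ + E₃₃)). Then the gauge-transformed matrix G₁MG₁⁻¹ + 4z(∂G₁/∂z)G₁⁻¹ equals the matrix obtained from M by the substitutions ε₁ ↦ ε₂, ε₂ ↦ ε₁ (equivalently α₁ ↦ -α₁, α₀ ↦ α₀+α₁, α₂ ↦ α₂+α₁), f₀ ↦ f₀ - 3rα₁/f₁, f₂ ↦ f₂ + gα₁/f₁, q ↦ q + α₁/f₁, with f₁, g, r unchanged, provided f₁ is treated as a function of x with the appropriate derivative relation. -/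

import Mathlib

/-! G₁ is the transvection I + (α₁/f₁)E₂₁ with entries constant in z, so its inverse is
I - (α₁/f₁)E₂₁ and the derivative term of the gauge action vanishes. Conjugating M by it adds
α₁/f₁ times the first row to the second and subtracts α₁/f₁ times the second column from the
first; since f₁ · (α₁/f₁) = ε₁ - ε₂, this exchanges ε₁ and ε₂ on the diagonal and shifts f₀, f₂, q
as claimed. -/

open Polynomial

/-- The matrix M of Section 4: M = diag(ε₁,ε₂,ε₃) + f₁E₁₂ + gE₁₃ + f₂E₂₃
  + z(E₁₁ + 3qE₂₁ - 2E₂₂ + f₀E₃₁ + 3rE₃₂ + E₃₃). -/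
noncomputable def Msec4 (ε1 ε2 ε3 f0 f1 f2 g q r : ℂ) : Matrix (Fin 3) (Fin 3) (Polynomial ℂ) :=
  Matrix.of ![![C ε1 + X, C f1, C g],
              ![C (3 * q) * X, C ε2 - 2 * X, C f2],
              ![C f0 * X, C (3 * r) * X, C ε3 + X]]

/-- The gauge matrix G₁ = I + (α₁/f₁)E₂₁. -/
noncomputable def G1 (α1 f1 : ℂ) : Matrix (Fin 3) (Fin 3) (Polynomial ℂ) :=
  1 + C (α1 / f1) • Matrix.single 1 0 1

/-- The inverse gauge matrix G₁⁻¹ = I - (α₁/f₁)E₂₁. -/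
noncomputable def G1inv (α1 f1 : ℂ) : Matrix (Fin 3) (Fin 3) (Polynomial ℂ) :=
  1 - C (α1 / f1) • Matrix.single 1 0 1

open Matrix

theorem G1_eq_transvection (α1 f1 : ℂ) : G1 α1 f1 = transvection 1 0 (C (α1 / f1)) := by
  rw [G1, transvection, smul_single, smul_eq_mul, mul_one]

theorem G1inv_eq_transvection (α1 f1 : ℂ) : G1inv α1 f1 = transvection 1 0 (-C (α1 / f1)) := by
  rw [G1inv, transvection, smul_single, smul_eq_mul, mul_one, sub_eq_add_neg, single_neg]

theorem G1_mul_G1inv (α1 f1 : ℂ) : G1 α1 f1 * G1inv α1 f1 = 1 := by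
  rw [G1_eq_transvection, G1inv_eq_transvection,
    transvection_mul_transvection_same _ _ (by decide), add_neg_cancel, transvection_zero]

theorem map_X_mul_derivative_transvection {R n : Type*} [CommRing R] [DecidableEq n] (i j : n)
    (c : R) :
    (transvection i j (C c)).map (fun p => X * derivative p) = 0 := by
  refine Matrix.ext fun a b => ?_
  simp only [transvection, map_apply, Matrix.add_apply, one_apply, single_apply, Matrix.zero_apply]
  split_ifs <;> simp

theorem transvection_mul_Msec4_mul_transvection (ε2 ε3 f0 f1 f2 g q r a : ℂ) :
    transvection 1 0 (C a) * Msec4 (ε2 + a * f1) ε2 ε3 f0 f1 f2 g q r * transvection 1 0 (-C a)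
      = Msec4 ε2 (ε2 + a * f1) ε3 (f0 - 3 * r * a) f1 (f2 + g * a) g (q + a) r := by
  refine Matrix.ext fun i j => ?_
  fin_cases i <;> fin_cases j <;>
    simp [Msec4, C_add, C_mul, C_sub, map_ofNat] <;> ring

theorem stmt_19_general (ε1 ε2 ε3 f0 f1 f2 g q r α1 : ℂ)
    (hα1 : α1 = ε1 - ε2) (hf1 : f1 ≠ 0) :
    G1 α1 f1 * G1inv α1 f1 = 1 ∧
    G1 α1 f1 * Msec4 ε1 ε2 ε3 f0 f1 f2 g q r * G1inv α1 f1
      + (4 : Polynomial ℂ) •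
        (((G1 α1 f1).map fun p => X * derivative p) * G1inv α1 f1)
      = Msec4 ε2 ε1 ε3 (f0 - 3 * r * α1 / f1) f1 (f2 + g * α1 / f1) g
          (q + α1 / f1) r := by
  have hε1 : ε1 = ε2 + α1 / f1 * f1 := by rw [div_mul_cancel₀ _ hf1, hα1]; ring
  refine ⟨G1_mul_G1inv α1 f1, ?_⟩
  rw [G1_eq_transvection, G1inv_eq_transvection, map_X_mul_derivative_transvection, zero_mul,
    smul_zero, add_zero, hε1, transvection_mul_Msec4_mul_transvection, mul_div_assoc,
    mul_div_assoc]

theorem stmt_19 (ε1 ε2 ε3 f0 f1 f2 g q r α1 : ℂ)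
    (hα1 : α1 = ε1 - ε2) (hf1 : f1 ≠ 0)
    (hconstr : g = f0 + 3 * q * r) :
    G1 α1 f1 * G1inv α1 f1 = 1 ∧
    G1 α1 f1 * Msec4 ε1 ε2 ε3 f0 f1 f2 g q r * G1inv α1 f1
      + (4 : Polynomial ℂ) •
        (((G1 α1 f1).map fun p => X * derivative p) * G1inv α1 f1)
      = Msec4 ε2 ε1 ε3 (f0 - 3 * r * α1 / f1) f1 (f2 + g * α1 / f1) g
          (q + α1 / f1) r :=
  stmt_19_general ε1 ε2 ε3 f0 f1 f2 g q r α1 hα1 hf1
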